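/- Let A ∈ ℝ^{M×N} satisfy RIP of order R+K with constant δ < 1. Let X ∈ ℝ^{N×L} be arbitrary, X^K its best K-row approximation, Γ ⊆ {1,...,N} with |Γ| ≤ R, and B = AX + W. Let V_{Γ,:} = A_Γ† B, V_{Γᶜ,:} = 0. Then ‖V_{Γ,:} − (X^K)_{Γ,:}‖_F ≤ (δ/(1−δ))·‖(X^K)_{Γᶜ,:}‖_F + (1/(1−δ))·(‖A(X − X^K)‖_F + ‖W‖_F). -/

import Mathlib

open scoped BigOperators
open Matrix

noncomputable def frob {m n : Type*} [Fintype m] [Fintype n] (X : Matrix m n ℝ) : ℝ :=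
  Real.sqrt (∑ i, ∑ j, (X i j) ^ 2)

noncomputable def rowNorm {m n : Type*} [Fintype n] (X : Matrix m n ℝ) (i : m) : ℝ :=
  Real.sqrt (∑ j, (X i j) ^ 2)

noncomputable def norm21 {m n : Type*} [Fintype m] [Fintype n] (X : Matrix m n ℝ) : ℝ :=
  ∑ i, rowNorm X i

noncomputable def restrictRows {m n : Type*} (X : Matrix m n ℝ) (S : Set m) : Matrix m n ℝ :=
  fun i j => S.indicator (fun i' => X i' j) i

noncomputable def vnorm {m : Type*} [Fintype m] (v : m → ℝ) : ℝ :=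
  Real.sqrt (∑ i, (v i) ^ 2)

/-- `X` has at most `s` nonzero rows. -/
def rowSparse {m n : Type*} (X : Matrix m n ℝ) (s : ℕ) : Prop :=
  {i | X i ≠ 0}.ncard ≤ s

/-- Column submatrix of `A` with columns indexed by `S`. -/
def colSub {M N : ℕ} (A : Matrix (Fin M) (Fin N) ℝ) (S : Finset (Fin N)) :
    Matrix (Fin M) {j // j ∈ S} ℝ :=
  A.submatrix id (fun j => (j : Fin N))

/-- `D` is the Moore–Penrose pseudo-inverse of `A` (the four Penrose conditions). -/
def IsPinv {m n : Type*} [Fintype m] [Fintype n] (A : Matrix m n ℝ) (D : Matrix n m ℝ) : Prop :=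
  A * D * A = A ∧ D * A * D = D ∧ (A * D)ᵀ = A * D ∧ (D * A)ᵀ = D * A

/-- Restricted isometry property of order `s` with constant `δ`. -/
def RIP {M N : ℕ} (A : Matrix (Fin M) (Fin N) ℝ) (s : ℕ) (δ : ℝ) : Prop :=
  ∀ x : Fin N → ℝ, {i | x i ≠ 0}.ncard ≤ s →
    (1 - δ) * (∑ i, (x i) ^ 2) ≤ (∑ i, (A.mulVec x i) ^ 2) ∧
      (∑ i, (A.mulVec x i) ^ 2) ≤ (1 + δ) * (∑ i, (x i) ^ 2)

section Aux
variable {m n m' : Type*} [Fintype m] [Fintype n] [Fintype m']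
lemma sum_sq_nonneg' (v : m → ℝ) : 0 ≤ ∑ i, (v i)^2 :=
  Finset.sum_nonneg fun _ _ => sq_nonneg _
lemma vnorm_nonneg' (v : m → ℝ) : 0 ≤ vnorm v := Real.sqrt_nonneg _
lemma vnorm_sq (v : m → ℝ) : vnorm v ^ 2 = ∑ i, (v i)^2 := Real.sq_sqrt (sum_sq_nonneg' v)
lemma sq_le_vnorm (v : m → ℝ) {b : ℝ} (hb : 0 ≤ b) (h : ∑ i, (v i)^2 ≤ b ^ 2) :
    vnorm v ≤ b := by
  rw [vnorm, show b = Real.sqrt (b^2) by rw [Real.sqrt_sq hb]]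
  exact Real.sqrt_le_sqrt h
lemma dot_le_vnorm (u v : m → ℝ) : ∑ i, u i * v i ≤ vnorm u * vnorm v :=
  Real.sum_mul_le_sqrt_mul_sqrt _ u v
lemma vnorm_add_le (u v : m → ℝ) : vnorm (fun i => u i + v i) ≤ vnorm u + vnorm v := by
  apply sq_le_vnorm _ (add_nonneg (vnorm_nonneg' u) (vnorm_nonneg' v))
  have e : ∑ i, (u i + v i)^2 = ∑ i, (u i)^2 + ∑ i, (v i)^2 + 2 * ∑ i, u i * v i := by
    rw [Finset.mul_sum, ← Finset.sum_add_distrib, ← Finset.sum_add_distrib]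
    exact Finset.sum_congr rfl fun i _ => by ring
  nlinarith [dot_le_vnorm u v, vnorm_sq u, vnorm_sq v, vnorm_nonneg' u, vnorm_nonneg' v]
lemma frob_eq_vnorm (X : Matrix m n ℝ) : frob X = vnorm (fun p : m × n => X p.1 p.2) := by
  rw [frob, vnorm, Fintype.sum_prod_type]
lemma frob_nonneg' (X : Matrix m n ℝ) : 0 ≤ frob X := Real.sqrt_nonneg _
lemma frob_add_le (P Q : Matrix m n ℝ) : frob (P + Q) ≤ frob P + frob Q := by
  rw [frob_eq_vnorm, frob_eq_vnorm, frob_eq_vnorm]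
  exact vnorm_add_le (fun p : m × n => P p.1 p.2) (fun p => Q p.1 p.2)
lemma frob_add3_le (P Q R : Matrix m n ℝ) :
    frob (P + Q + R) ≤ frob P + frob Q + frob R :=
  (frob_add_le _ _).trans (add_le_add (frob_add_le _ _) le_rfl)
lemma frob_le_col (P : Matrix m n ℝ) (Q : Matrix m' n ℝ) {c : ℝ} (hc : 0 ≤ c)
    (h : ∀ l, vnorm (fun i => P i l) ≤ c * vnorm (fun i => Q i l)) :
    frob P ≤ c * frob Q := by
  rw [frob, frob, Finset.sum_comm, Finset.sum_comm (γ := m')]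
  have key : ∑ l, ∑ i, (P i l)^2 ≤ c^2 * ∑ l, ∑ i, (Q i l)^2 := by
    rw [Finset.mul_sum]
    refine Finset.sum_le_sum fun l _ => ?_
    have h2 := pow_le_pow_left₀ (vnorm_nonneg' _) (h l) 2
    rw [mul_pow, vnorm_sq, vnorm_sq] at h2
    exact h2
  calc Real.sqrt (∑ l, ∑ i, (P i l)^2) ≤ Real.sqrt (c^2 * ∑ l, ∑ i, (Q i l)^2) :=
        Real.sqrt_le_sqrt key
    _ = c * Real.sqrt (∑ l, ∑ i, (Q i l)^2) := by
        rw [Real.sqrt_mul (sq_nonneg c), Real.sqrt_sq hc]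
end Aux

set_option maxHeartbeats 4000000 in
theorem stmt11 {M N L R K : ℕ} (A : Matrix (Fin M) (Fin N) ℝ) (δ : ℝ)
    (hδ0 : 0 ≤ δ) (hδ : δ < 1) (hRIP : RIP A (R + K) δ)
    (X : Matrix (Fin N) (Fin L) ℝ)
    (S : Finset (Fin N)) (hS : S.card = K)
    (hSdom : ∀ i ∈ S, ∀ j ∉ S, rowNorm X j ≤ rowNorm X i)
    (XK : Matrix (Fin N) (Fin L) ℝ) (hXK : XK = restrictRows X (S : Set (Fin N)))
    (Γ : Finset (Fin N)) (hΓ : Γ.card ≤ R)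
    (DΓ : Matrix {j // j ∈ Γ} (Fin M) ℝ) (hDΓ : IsPinv (colSub A Γ) DΓ)
    (W B : Matrix (Fin M) (Fin L) ℝ) (hB : B = A * X + W)
    (V : Matrix (Fin N) (Fin L) ℝ)
    (hV : V = fun i j => if h : i ∈ Γ then (DΓ * B) ⟨i, h⟩ j else 0) :
    frob (V - restrictRows XK (Γ : Set (Fin N))) ≤
      (δ / (1 - δ)) * frob (restrictRows XK {i | i ∉ Γ}) +
        (1 / (1 - δ)) * (frob (A * (X - XK)) + frob W) := by
  classical
  obtain ⟨hp1, hp2, hp3, hp4⟩ := hDΓ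
  set AΓ := colSub A Γ with hAΓdef
  have h1δ : (0:ℝ) < 1 - δ := by linarith
  -- padding of vectors indexed by Γ
  set pad : ({j // j ∈ Γ} → ℝ) → (Fin N → ℝ) :=
    fun u i => if h : i ∈ Γ then u ⟨i, h⟩ else 0 with hpaddef
  have pad_mulVec : ∀ u, A.mulVec (pad u) = AΓ.mulVec u := by
    intro u; funext i
    simp only [Matrix.mulVec, dotProduct]
    rw [show (∑ j, A i j * pad u j) = ∑ j ∈ Γ, A i j * pad u j from
      (Finset.sum_subset (Finset.subset_univ Γ)
        (by intro j _ hj; simp [hpaddef, hj])).symm,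
      ← Finset.sum_coe_sort Γ (fun j => A i j * pad u j)]
    refine Finset.sum_congr rfl fun j _ => ?_
    simp [hpaddef, hAΓdef, colSub, j.2]
  have pad_sumsq : ∀ u, ∑ i, (pad u i)^2 = ∑ j, (u j)^2 := by
    intro u
    rw [show (∑ i, (pad u i)^2) = ∑ i ∈ Γ, (pad u i)^2 from
      (Finset.sum_subset (Finset.subset_univ Γ)
        (by intro j _ hj; simp [hpaddef, hj])).symm,
      ← Finset.sum_coe_sort Γ (fun j => (pad u j)^2)]
    refine Finset.sum_congr rfl fun j _ => ?_
    simp [hpaddef, j.2]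
  have pad_suppR : ∀ u, {i | pad u i ≠ 0}.ncard ≤ R := by
    intro u
    have hsub : {i | pad u i ≠ 0} ⊆ (Γ : Set (Fin N)) := by
      intro i hi
      by_contra hc
      apply hi
      simp only [hpaddef]
      rw [dif_neg (fun h => hc (Finset.mem_coe.mpr h))]
    calc {i | pad u i ≠ 0}.ncard ≤ (Γ : Set (Fin N)).ncard :=
          Set.ncard_le_ncard hsub (Set.toFinite _)
      _ = Γ.card := Set.ncard_coe_finset Γ
      _ ≤ R := hΓ
  have pad_sparse : ∀ u, {i | pad u i ≠ 0}.ncard ≤ R + K :=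
    fun u => (pad_suppR u).trans (Nat.le_add_right _ _)
  -- injectivity of AΓ and DΓ * AΓ = 1
  have hinj : ∀ u, AΓ.mulVec u = 0 → u = 0 := by
    intro u hu
    have h := (hRIP (pad u) (pad_sparse u)).1
    rw [pad_mulVec, hu] at h
    simp only [Pi.zero_apply, ne_eq, OfNat.ofNat_ne_zero, not_false_eq_true, zero_pow,
      Finset.sum_const_zero] at h
    have hz : ∑ i, (pad u i)^2 = 0 :=
      le_antisymm (by nlinarith [sum_sq_nonneg' (pad u)]) (sum_sq_nonneg' (pad u))
    have hz2 := (Finset.sum_eq_zero_iff_of_nonneg (fun i _ => sq_nonneg (pad u i))).mp hz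
    funext j
    have := hz2 (j : Fin N) (Finset.mem_univ _)
    have h3 : pad u (j : Fin N) = 0 := by
      exact pow_eq_zero_iff (by norm_num) |>.mp this
    simpa [hpaddef, j.2] using h3
  have hDA : DΓ * AΓ = 1 := by
    have hAD : AΓ * (DΓ * AΓ) = AΓ := by rw [← Matrix.mul_assoc, hp1]
    have huv : ∀ u, (DΓ * AΓ).mulVec u = u := by
      intro u
      have hzero : AΓ.mulVec ((DΓ * AΓ).mulVec u - u) = 0 := by
        rw [Matrix.mulVec_sub, Matrix.mulVec_mulVec, hAD, sub_self]
      have := hinj _ hzero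
      exact sub_eq_zero.mp this
    ext i j
    have := congrFun (huv (Pi.single j 1)) i
    rw [Matrix.mulVec_single] at this
    simpa [Matrix.one_apply, Pi.single_apply, eq_comm] using this
  -- the projection P = AΓ * DΓ
  set P := AΓ * DΓ with hPdef
  have hdotsym : ∀ x y, P.mulVec x ⬝ᵥ y = x ⬝ᵥ P.mulVec y := by
    intro x y
    conv_rhs => rw [Matrix.dotProduct_mulVec, ← hp3, Matrix.vecMul_transpose]
  have hPP : P * P = P := by
    nth_rewrite 2 [hPdef]
    rw [← Matrix.mul_assoc, hp1]
  have hPcontract : ∀ c, ∑ i, (P.mulVec c i)^2 ≤ ∑ i, (c i)^2 := by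
    intro c
    have h1 : ∑ i, (P.mulVec c i)^2 = P.mulVec c ⬝ᵥ P.mulVec c := by
      simp [dotProduct, pow_two]
    have h2 : P.mulVec c ⬝ᵥ P.mulVec c = c ⬝ᵥ P.mulVec c := by
      rw [hdotsym c (P.mulVec c), Matrix.mulVec_mulVec, hPP]
    have h3 : c ⬝ᵥ P.mulVec c ≤ vnorm c * vnorm (P.mulVec c) := by
      simpa [dotProduct] using dot_le_vnorm c (P.mulVec c)
    have h4 := vnorm_sq (P.mulVec c)
    have h5 := vnorm_sq c
    nlinarith [vnorm_nonneg' (P.mulVec c), vnorm_nonneg' c,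
      sq_nonneg (vnorm (P.mulVec c) - vnorm c)]
  -- Lemma A : pseudo-inverse contracts norms up to 1/(1-δ)
  have lemA : ∀ c : Fin M → ℝ, vnorm (pad (DΓ.mulVec c)) ≤ (1/(1-δ)) * vnorm c := by
    intro c
    have hR := (hRIP (pad (DΓ.mulVec c)) (pad_sparse _)).1
    rw [pad_mulVec] at hR
    have hPc : AΓ.mulVec (DΓ.mulVec c) = P.mulVec c := by
      rw [Matrix.mulVec_mulVec, ← hPdef]
    rw [hPc] at hR
    have h2 := hPcontract c
    apply sq_le_vnorm _ (mul_nonneg (by positivity) (vnorm_nonneg' c))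
    rw [mul_pow, vnorm_sq, div_pow, one_pow, one_div_mul_eq_div, le_div_iff₀ (pow_pos h1δ 2)]
    nlinarith [sum_sq_nonneg' (pad (DΓ.mulVec c)), sum_sq_nonneg' c,
      mul_le_mul_of_nonneg_left hR h1δ.le,
      mul_le_mul_of_nonneg_left h2 (mul_nonneg h1δ.le h1δ.le)]
  -- RIP inner product bound, half-sum version
  have halfsum : ∀ a b : Fin N → ℝ, (∀ i, a i * b i = 0) →
      {i | a i ≠ 0}.ncard + {i | b i ≠ 0}.ncard ≤ R + K →
      A.mulVec a ⬝ᵥ A.mulVec b ≤ δ * (∑ i, (a i)^2 + ∑ i, (b i)^2) / 2 := by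
    intro a b hab hcard
    have hsub1 : {i | (a + b) i ≠ 0} ⊆ {i | a i ≠ 0} ∪ {i | b i ≠ 0} := by
      intro i hi
      by_contra hc
      simp only [Set.mem_union, Set.mem_setOf_eq, not_or, not_not] at hc
      exact hi (by simp [Pi.add_apply, hc.1, hc.2])
    have hsub2 : {i | (a - b) i ≠ 0} ⊆ {i | a i ≠ 0} ∪ {i | b i ≠ 0} := by
      intro i hi
      by_contra hc
      simp only [Set.mem_union, Set.mem_setOf_eq, not_or, not_not] at hc
      exact hi (by simp [Pi.sub_apply, hc.1, hc.2])
    have hsp1 : {i | (a + b) i ≠ 0}.ncard ≤ R + K :=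
      ((Set.ncard_le_ncard hsub1 (Set.toFinite _)).trans
        (Set.ncard_union_le _ _)).trans hcard
    have hsp2 : {i | (a - b) i ≠ 0}.ncard ≤ R + K :=
      ((Set.ncard_le_ncard hsub2 (Set.toFinite _)).trans
        (Set.ncard_union_le _ _)).trans hcard
    have h1 := (hRIP (a + b) hsp1).2
    have h2 := (hRIP (a - b) hsp2).1
    have e1 : ∑ i, (A.mulVec (a + b) i)^2
        = ∑ i, (A.mulVec a i)^2 + ∑ i, (A.mulVec b i)^2
          + 2 * (A.mulVec a ⬝ᵥ A.mulVec b) := by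
      rw [Matrix.mulVec_add]
      simp only [Pi.add_apply, dotProduct]
      rw [Finset.mul_sum, ← Finset.sum_add_distrib, ← Finset.sum_add_distrib]
      exact Finset.sum_congr rfl fun i _ => by ring
    have e2 : ∑ i, (A.mulVec (a - b) i)^2
        = ∑ i, (A.mulVec a i)^2 + ∑ i, (A.mulVec b i)^2
          - 2 * (A.mulVec a ⬝ᵥ A.mulVec b) := by
      rw [Matrix.mulVec_sub]
      simp only [Pi.sub_apply, dotProduct]
      rw [show (∑ i, (A.mulVec a i - A.mulVec b i)^2)
          = ∑ i, ((A.mulVec a i)^2 + (A.mulVec b i)^2 - 2*(A.mulVec a i * A.mulVec b i))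
        from Finset.sum_congr rfl fun i _ => by ring,
        Finset.sum_sub_distrib, Finset.sum_add_distrib, Finset.mul_sum]
    have ca : ∑ i, ((a + b) i)^2 = ∑ i, (a i)^2 + ∑ i, (b i)^2 := by
      rw [← Finset.sum_add_distrib]
      exact Finset.sum_congr rfl fun i _ => by
        simp only [Pi.add_apply]; linear_combination 2 * hab i
    have cb : ∑ i, ((a - b) i)^2 = ∑ i, (a i)^2 + ∑ i, (b i)^2 := by
      rw [← Finset.sum_add_distrib]
      exact Finset.sum_congr rfl fun i _ => by
        simp only [Pi.sub_apply]; linear_combination (-2 : ℝ) * hab i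
    rw [e1, ca] at h1
    rw [e2, cb] at h2
    linarith
  -- RIP inner product bound, product version
  have hIP : ∀ a b : Fin N → ℝ, (∀ i, a i * b i = 0) →
      {i | a i ≠ 0}.ncard + {i | b i ≠ 0}.ncard ≤ R + K →
      A.mulVec a ⬝ᵥ A.mulVec b ≤ δ * (vnorm a * vnorm b) := by
    intro a b hab hcard
    by_cases ha : ∑ i, (a i)^2 = 0
    · have ha0 : a = 0 := funext fun i =>
        pow_eq_zero_iff two_ne_zero |>.mp
          ((Finset.sum_eq_zero_iff_of_nonneg (fun i _ => sq_nonneg (a i))).mp ha i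
            (Finset.mem_univ i))
      rw [ha0, Matrix.mulVec_zero, zero_dotProduct]
      exact mul_nonneg hδ0 (mul_nonneg (vnorm_nonneg' _) (vnorm_nonneg' _))
    by_cases hb : ∑ i, (b i)^2 = 0
    · have hb0 : b = 0 := funext fun i =>
        pow_eq_zero_iff two_ne_zero |>.mp
          ((Finset.sum_eq_zero_iff_of_nonneg (fun i _ => sq_nonneg (b i))).mp hb i
            (Finset.mem_univ i))
      rw [hb0, Matrix.mulVec_zero, dotProduct_zero]
      exact mul_nonneg hδ0 (mul_nonneg (vnorm_nonneg' _) (vnorm_nonneg' _))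
    · have hva : 0 < vnorm a :=
        Real.sqrt_pos.mpr (lt_of_le_of_ne (sum_sq_nonneg' a) (Ne.symm ha))
      have hvb : 0 < vnorm b :=
        Real.sqrt_pos.mpr (lt_of_le_of_ne (sum_sq_nonneg' b) (Ne.symm hb))
      set a' : Fin N → ℝ := vnorm b • a with ha'
      set b' : Fin N → ℝ := vnorm a • b with hb'
      have hab' : ∀ i, a' i * b' i = 0 := by
        intro i
        rw [show a' i * b' i = (vnorm b * vnorm a) * (a i * b i) from by
          simp only [ha', hb', Pi.smul_apply, smul_eq_mul]; ring, hab i, mul_zero]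
      have hcard' : {i | a' i ≠ 0}.ncard + {i | b' i ≠ 0}.ncard ≤ R + K := by
        refine le_trans (add_le_add
          (Set.ncard_le_ncard ?_ (Set.toFinite _))
          (Set.ncard_le_ncard ?_ (Set.toFinite _))) hcard
        · intro i hi
          simp only [Set.mem_setOf_eq, ha', Pi.smul_apply, smul_eq_mul] at hi ⊢
          exact fun h => hi (by rw [h, mul_zero])
        · intro i hi
          simp only [Set.mem_setOf_eq, hb', Pi.smul_apply, smul_eq_mul] at hi ⊢
          exact fun h => hi (by rw [h, mul_zero])
      have hh := halfsum a' b' hab' hcard'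
      have hd : A.mulVec a' ⬝ᵥ A.mulVec b'
          = (vnorm b * vnorm a) * (A.mulVec a ⬝ᵥ A.mulVec b) := by
        rw [ha', hb', Matrix.mulVec_smul, Matrix.mulVec_smul, smul_dotProduct,
          dotProduct_smul]
        simp only [smul_eq_mul]; ring
      have hsa : ∑ i, (a' i)^2 = vnorm b ^2 * ∑ i, (a i)^2 := by
        rw [Finset.mul_sum]
        exact Finset.sum_congr rfl fun i _ => by
          simp only [ha', Pi.smul_apply, smul_eq_mul]; ring
      have hsb : ∑ i, (b' i)^2 = vnorm a ^2 * ∑ i, (b i)^2 := by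
        rw [Finset.mul_sum]
        exact Finset.sum_congr rfl fun i _ => by
          simp only [hb', Pi.smul_apply, smul_eq_mul]; ring
      rw [hd, hsa, hsb, ← vnorm_sq a, ← vnorm_sq b] at hh
      have key : (vnorm b * vnorm a) * (A.mulVec a ⬝ᵥ A.mulVec b)
          ≤ (vnorm b * vnorm a) * (δ * (vnorm a * vnorm b)) := by
        calc (vnorm b * vnorm a) * (A.mulVec a ⬝ᵥ A.mulVec b)
            ≤ δ * (vnorm b ^2 * vnorm a ^2 + vnorm a ^2 * vnorm b ^2) / 2 := hh
          _ = (vnorm b * vnorm a) * (δ * (vnorm a * vnorm b)) := by ring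
      exact le_of_mul_le_mul_left key (mul_pos hvb hva)
  -- Lemma B
  have lemB : ∀ z : Fin N → ℝ, (∀ i ∈ Γ, z i = 0) → {i | z i ≠ 0}.ncard ≤ K →
      vnorm (pad (DΓ.mulVec (A.mulVec z))) ≤ (δ/(1-δ)) * vnorm z := by
    intro z hz hzK
    set u := DΓ.mulVec (A.mulVec z) with hudef
    have hpz : ∀ i, pad u i * z i = 0 := by
      intro i; by_cases h : i ∈ Γ
      · rw [hz i h, mul_zero]
      · rw [show pad u i = 0 from by simp only [hpaddef]; rw [dif_neg h], zero_mul]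
    have hcards : {i | pad u i ≠ 0}.ncard + {i | z i ≠ 0}.ncard ≤ R + K :=
      add_le_add (pad_suppR u) hzK
    have hip := hIP (pad u) z hpz hcards
    have hR := (hRIP (pad u) (pad_sparse u)).1
    rw [pad_mulVec] at hR
    have hds : ∑ i, (AΓ.mulVec u i)^2 = AΓ.mulVec u ⬝ᵥ AΓ.mulVec u := by
      simp [dotProduct, pow_two]
    have hA1 : AΓ.mulVec u = P.mulVec (A.mulVec z) := by
      rw [hudef, Matrix.mulVec_mulVec, ← hPdef]
    have hfix : P.mulVec (AΓ.mulVec u) = AΓ.mulVec u := by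
      rw [Matrix.mulVec_mulVec, hp1]
    have key : AΓ.mulVec u ⬝ᵥ AΓ.mulVec u = A.mulVec (pad u) ⬝ᵥ A.mulVec z := by
      conv_lhs => rw [show (AΓ.mulVec u ⬝ᵥ AΓ.mulVec u : ℝ)
        = AΓ.mulVec u ⬝ᵥ P.mulVec (A.mulVec z) from by rw [← hA1]]
      rw [← hdotsym, hfix, ← pad_mulVec]
    set t := vnorm (pad u) with htdef
    have hts : ∑ i, (pad u i)^2 = t^2 := (vnorm_sq _).symm
    have hchain : (1-δ) * t^2 ≤ δ * (t * vnorm z) := by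
      rw [← hts]
      calc (1-δ) * ∑ i, (pad u i)^2 ≤ ∑ i, (AΓ.mulVec u i)^2 := hR
        _ = A.mulVec (pad u) ⬝ᵥ A.mulVec z := by rw [hds, key]
        _ ≤ δ * (t * vnorm z) := hip
    rcases eq_or_lt_of_le (vnorm_nonneg' (pad u)) with h0 | h0
    · rw [htdef, ← h0]
      exact mul_nonneg (div_nonneg hδ0 h1δ.le) (vnorm_nonneg' z)
    · have h2 : (1-δ) * t ≤ δ * vnorm z := by nlinarith [hchain, h0]
      rw [div_mul_eq_mul_div, le_div_iff₀ h1δ]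
      linarith
  -- matrix-level decomposition
  set XK1 := restrictRows XK (Γ : Set (Fin N)) with hXK1
  set XK2 := restrictRows XK {i | i ∉ Γ} with hXK2
  have hsplit : XK = XK1 + XK2 := by
    funext i j
    by_cases h : i ∈ Γ
    · simp [hXK1, hXK2, restrictRows, Set.indicator_apply, h, Matrix.add_apply]
    · simp [hXK1, hXK2, restrictRows, Set.indicator_apply, h, Matrix.add_apply]
  set Epad : Matrix (Fin M) (Fin L) ℝ → Matrix (Fin N) (Fin L) ℝ :=
    fun C i j => if h : i ∈ Γ then (DΓ * C) ⟨i, h⟩ j else 0 with hEpad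
  have hVE : V = Epad B := hV
  have hEcol : ∀ C l, (fun i => Epad C i l) = pad (DΓ.mulVec (fun k => C k l)) := by
    intro C l; funext i
    by_cases h : i ∈ Γ
    · simp only [hEpad, hpaddef, dif_pos h]
      simp [Matrix.mul_apply, Matrix.mulVec, dotProduct]
    · simp only [hEpad, hpaddef, dif_neg h]
  have hEadd : ∀ C C', Epad (C + C') = Epad C + Epad C' := by
    intro C C'; funext i j; rw [Matrix.add_apply]
    by_cases h : i ∈ Γ <;> simp [hEpad, Matrix.mul_add, Matrix.add_apply, Pi.add_apply, h]
  have hEsub : ∀ C C', Epad (C - C') = Epad C - Epad C' := by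
    intro C C'; funext i j; rw [Matrix.sub_apply]
    by_cases h : i ∈ Γ <;> simp [hEpad, Matrix.mul_sub, Matrix.sub_apply, Pi.sub_apply, h]
  have hfact : DΓ * (A * XK1) = XK1.submatrix (fun p : {j // j ∈ Γ} => (p : Fin N)) id := by
    have hAX : A * XK1 = AΓ * XK1.submatrix (fun p : {j // j ∈ Γ} => (p : Fin N)) id := by
      ext i j
      rw [Matrix.mul_apply, Matrix.mul_apply]
      rw [show (∑ k, A i k * XK1 k j) = ∑ k ∈ Γ, A i k * XK1 k j from
        (Finset.sum_subset (Finset.subset_univ Γ) (fun k _ hk => by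
          simp [hXK1, restrictRows, Set.indicator_apply, hk])).symm,
        ← Finset.sum_coe_sort Γ (fun k => A i k * XK1 k j)]
      exact Finset.sum_congr rfl fun k _ => by
        simp [hAΓdef, colSub, Matrix.submatrix_apply]
    rw [hAX, ← Matrix.mul_assoc, hDA, Matrix.one_mul]
  have hXK1E : Epad (A * XK1) = XK1 := by
    funext i j
    by_cases h : i ∈ Γ
    · simp only [hEpad, dif_pos h, hfact, Matrix.submatrix_apply, id]
    · simp only [hEpad, dif_neg h]
      simp [hXK1, restrictRows, Set.indicator_apply, h]
  have hBdecomp : B - A * XK1 = A * XK2 + (A * (X - XK) + W) := by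
    have hAX2 : A * X = A * XK1 + A * XK2 + A * (X - XK) := by
      rw [Matrix.mul_sub, ← Matrix.mul_add, ← hsplit]; abel
    rw [hB, hAX2]; abel
  have hEdecomp : V - XK1 = Epad (A * XK2) + Epad (A * (X - XK)) + Epad W := by
    rw [hVE, ← hXK1E, ← hEsub, hBdecomp, hEadd, hEadd, ← add_assoc]
  have col_mul : ∀ (Y : Matrix (Fin N) (Fin L) ℝ) l,
      (fun k => (A * Y) k l) = A.mulVec (fun k => Y k l) := by
    intro Y l; funext i; simp [Matrix.mul_apply, Matrix.mulVec, dotProduct]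
  have hb1 : frob (Epad (A * XK2)) ≤ (δ/(1-δ)) * frob XK2 := by
    apply frob_le_col _ _ (div_nonneg hδ0 h1δ.le)
    intro l
    rw [hEcol, col_mul]
    apply lemB
    · intro i hi
      simp [hXK2, restrictRows, Set.indicator_apply, hi]
    · have hsub : {i | XK2 i l ≠ 0} ⊆ (S : Set (Fin N)) := by
        intro i hi
        simp only [Set.mem_setOf_eq, hXK2, restrictRows, Set.indicator_apply] at hi
        by_contra hc
        have hXKz : XK i l = 0 := by
          rw [hXK]
          simp only [restrictRows, Set.indicator_apply]
          rw [if_neg hc]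
        simp [hXKz] at hi
      calc {i | XK2 i l ≠ 0}.ncard ≤ (S : Set (Fin N)).ncard :=
            Set.ncard_le_ncard hsub (Set.toFinite _)
        _ = S.card := Set.ncard_coe_finset S
        _ ≤ K := le_of_eq hS
  have hb2 : frob (Epad (A * (X - XK))) ≤ (1/(1-δ)) * frob (A * (X - XK)) := by
    apply frob_le_col _ _ (by positivity)
    intro l
    rw [hEcol, col_mul]
    exact lemA _
  have hb3 : frob (Epad W) ≤ (1/(1-δ)) * frob W := by
    apply frob_le_col _ _ (by positivity)
    intro l
    rw [hEcol]
    exact lemA _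
  calc frob (V - XK1)
      = frob (Epad (A * XK2) + Epad (A * (X - XK)) + Epad W) := by rw [hEdecomp]
    _ ≤ frob (Epad (A * XK2)) + frob (Epad (A * (X - XK))) + frob (Epad W) :=
        frob_add3_le _ _ _
    _ ≤ (δ/(1-δ)) * frob XK2 + (1/(1-δ)) * (frob (A * (X - XK)) + frob W) := by
        rw [mul_add]; linarith
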